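/- arXiv:1208.0525 — 2 statements merged into one kernel-verified Lean document; each statement's English description precedes it below -/
import Mathlib

section
/- For every connected graph G on N vertices, the maximum hitting time of the biased random walk satisfies H_{P^B}(G) = max_{x,y} H_{P^B}(x,y) < N^4 / 2. -/
open Finset

/-- Transition matrix of the biased random walk `X_B` on a graph `G` on `N` vertices:
`P^B_{ij} = (1/N)(1/|N_i| + 1/|N_j|)` for edges, `P^B_{ii} = 1 - Σ_{k ∈ N_i} P^B_{ik}`,
and `0` otherwise. -/
noncomputable def PB (N : ℕ) (G : SimpleGraph (Fin N)) [DecidableRel G.Adj] (i j : Fin N) : ℝ :=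
  if G.Adj i j then (1 / (N : ℝ)) * (1 / (G.degree i : ℝ) + 1 / (G.degree j : ℝ))
  else if i = j then
    1 - ∑ k ∈ G.neighborFinset i,
      (1 / (N : ℝ)) * (1 / (G.degree i : ℝ) + 1 / (G.degree k : ℝ))
  else 0

/-- `H` is the vector of expected hitting times of the Markov chain with transition
matrix `P^B` on the vertices of `G`: `H i j` is the expected number of steps a walk
started at `i` takes to first reach `j`, characterized by the first-step equations. -/
def IsHittingTime (N : ℕ) (G : SimpleGraph (Fin N)) [DecidableRel G.Adj]
    (H : Fin N → Fin N → ℝ) : Prop :=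
  (∀ y, H y y = 0) ∧
  ∀ x y, x ≠ y → H x y = 1 + ∑ k : Fin N, PB N G x k * H k y

/-!
For a target `y`, `h = H(·, y)` is nonnegative by the minimum principle. Since `P^B` is
symmetric and stochastic, the first-step equations say that every vertex `x ≠ y` emits one
unit of net flow `∑ₖ P x k (h x - h k)`. Summed over the level set `A = {h > h v}` of an
edge `uv` with `h u > h v`, the flow inside `A` cancels, all boundary flow points outwards, and
the total is `|A| ≤ N`; hence `P_uv (h u - h v) ≤ N`. As `P_uv ≥ 2 / (N (N - 1))` on edges, `h`
changes by at most `N² (N - 1) / 2` along an edge, and a path from `y` to `x` of length at most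
`N - 1` gives `H(x, y) ≤ N² (N - 1)² / 2 < N⁴ / 2`.
-/

open Matrix

/-- `h = H_P(·, y)`: the first-step equations of the hitting time of `y`. -/
def IsHittingTimeTo {ι : Type*} [Fintype ι] (P : Matrix ι ι ℝ) (y : ι) (h : ι → ℝ) : Prop :=
  h y = 0 ∧ ∀ x, x ≠ y → h x = 1 + ∑ k, P x k * h k

namespace IsHittingTimeTo

variable {ι : Type*} [Fintype ι] {P : Matrix ι ι ℝ} {y : ι} {h : ι → ℝ}

theorem sum_mul_sub_eq_one (hh : IsHittingTimeTo P y h) (hP : ∀ i, ∑ j, P i j = 1)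
    {x : ι} (hx : x ≠ y) : ∑ k, P x k * (h x - h k) = 1 := by
  simp only [mul_sub, sum_sub_distrib, ← sum_mul, hP, one_mul]
  linarith [hh.2 x hx]

theorem nonneg [DecidableEq ι] (hh : IsHittingTimeTo P y h) (hP : P ∈ rowStochastic ℝ ι)
    (x : ι) : 0 ≤ h x := by
  have : Nonempty ι := ⟨y⟩
  obtain ⟨x₀, hmin⟩ := Finite.exists_min h
  suffices 0 ≤ h x₀ from this.trans (hmin x)
  by_contra! hneg
  have hx₀ : x₀ ≠ y := fun e => by linarith [e ▸ hh.1]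
  have : ∑ k, P x₀ k * (h x₀ - h k) ≤ 0 :=
    sum_nonpos fun k _ => mul_nonpos_of_nonneg_of_nonpos
      (nonneg_of_mem_rowStochastic hP) (by linarith [hmin k])
  linarith [hh.sum_mul_sub_eq_one (fun i => sum_row_of_mem_rowStochastic hP i) hx₀]

theorem sum_sum_compl_eq_card [DecidableEq ι] (hh : IsHittingTimeTo P y h)
    (hP : ∀ i, ∑ j, P i j = 1) (hPs : P.IsSymm) {A : Finset ι} (hyA : y ∉ A) :
    ∑ x ∈ A, ∑ k ∈ Aᶜ, P x k * (h x - h k) = #A := by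
  have hout : ∑ x ∈ A, ∑ k, P x k * (h x - h k) = #A := by
    rw [sum_congr rfl fun x hx => hh.sum_mul_sub_eq_one hP (ne_of_mem_of_not_mem hx hyA)]
    simp
  have hin : ∑ x ∈ A, ∑ k ∈ A, P x k * (h x - h k) = 0 := by
    have hswap := sum_comm (s := A) (t := A) (f := fun x k => P x k * (h x - h k))
    have hanti : ∑ k ∈ A, ∑ x ∈ A, P x k * (h x - h k)
        = -∑ k ∈ A, ∑ x ∈ A, P k x * (h k - h x) := by
      simp only [← sum_neg_distrib, hPs.apply]
      exact sum_congr rfl fun _ _ => sum_congr rfl fun _ _ => by ring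
    linarith
  simp only [← sum_add_sum_compl A, sum_add_distrib, hin, zero_add] at hout
  exact hout

theorem mul_sub_le_card [DecidableEq ι] (hh : IsHittingTimeTo P y h)
    (hP : P ∈ rowStochastic ℝ ι) (hPs : P.IsSymm) (u v : ι) :
    P u v * (h u - h v) ≤ Fintype.card ι := by
  rcases le_or_gt (h u) (h v) with huv | huv
  · exact (mul_nonpos_of_nonneg_of_nonpos (nonneg_of_mem_rowStochastic hP)
      (by linarith)).trans (Nat.cast_nonneg _)
  set A : Finset ι := {z | h v < h z}
  have hyA : y ∉ A := by simpa [A, hh.1] using hh.nonneg hP v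
  have hflow : ∀ x ∈ A, ∀ k ∈ Aᶜ, 0 ≤ P x k * (h x - h k) := fun x hx k hk => by
    simp only [A, mem_compl, mem_filter, mem_univ, true_and, not_lt] at hx hk
    exact mul_nonneg (nonneg_of_mem_rowStochastic hP) (by linarith)
  have huA : u ∈ A := by simpa [A] using huv
  have hvA : v ∈ Aᶜ := by simp [A]
  calc P u v * (h u - h v)
      ≤ ∑ k ∈ Aᶜ, P u k * (h u - h k) := single_le_sum (hflow u huA) hvA
    _ ≤ ∑ x ∈ A, ∑ k ∈ Aᶜ, P x k * (h x - h k) :=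
        single_le_sum (fun x hx => sum_nonneg (hflow x hx)) huA
    _ = #A := hh.sum_sum_compl_eq_card (fun i => sum_row_of_mem_rowStochastic hP i) hPs hyA
    _ ≤ Fintype.card ι := by exact_mod_cast card_le_univ A

theorem sub_le_card_div [DecidableEq ι] (hh : IsHittingTimeTo P y h)
    (hP : P ∈ rowStochastic ℝ ι) (hPs : P.IsSymm) {c : ℝ} (hc : 0 < c) {u v : ι}
    (hcuv : c ≤ P u v) : h u - h v ≤ Fintype.card ι / c := by
  rcases le_or_gt (h u - h v) 0 with hd | hd
  · exact hd.trans (by positivity)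
  rw [le_div_iff₀' hc]
  exact (mul_le_mul_of_nonneg_right hcuv hd.le).trans (hh.mul_sub_le_card hP hPs u v)

end IsHittingTimeTo

theorem SimpleGraph.Walk.le_add_length_mul {V : Type*} {G : SimpleGraph V} {f : V → ℝ} {D : ℝ}
    (hD : ∀ a b, G.Adj a b → f b ≤ f a + D) {u v : V} (w : G.Walk u v) :
    f v ≤ f u + w.length * D := by
  induction w with
  | nil => simp
  | cons hab _ ih =>
    rw [SimpleGraph.Walk.length_cons, Nat.cast_succ]
    linarith [hD _ _ hab]

section BiasedWalk

variable {N : ℕ} {G : SimpleGraph (Fin N)} [DecidableRel G.Adj]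

theorem PB_of_adj {i j : Fin N} (h : G.Adj i j) :
    PB N G i j = 1 / (N : ℝ) * (1 / (G.degree i : ℝ) + 1 / (G.degree j : ℝ)) :=
  if_pos h

theorem PB_of_not_adj_of_ne {i j : Fin N} (h : ¬G.Adj i j) (hij : i ≠ j) : PB N G i j = 0 := by
  simp [PB, h, hij]

theorem PB_self (i : Fin N) : PB N G i i = 1 - ∑ k ∈ G.neighborFinset i, PB N G i k := by
  rw [PB, if_neg (G.loopless.irrefl i), if_pos rfl,
    sum_congr rfl fun k hk => PB_of_adj ((G.mem_neighborFinset i k).1 hk)]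

theorem degree_add_one_le (k : Fin N) : (G.degree k : ℝ) + 1 ≤ N :=
  mod_cast (by simpa using G.degree_lt_card_verts k : G.degree k < N)

theorem sum_neighborFinset_PB_le_one (i : Fin N) : ∑ k ∈ G.neighborFinset i, PB N G i k ≤ 1 := by
  have hdeg := degree_add_one_le (G := G) i
  calc ∑ k ∈ G.neighborFinset i, PB N G i k
      ≤ ∑ _k ∈ G.neighborFinset i, 1 / (N : ℝ) * (1 / (G.degree i : ℝ) + 1) := by
        refine sum_le_sum fun k hk => ?_
        have hik := (G.mem_neighborFinset i k).1 hk
        have : (1 : ℝ) ≤ G.degree k := by exact_mod_cast hik.degree_pos_right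
        rw [PB_of_adj hik]
        gcongr
        exact div_le_one_of_le₀ this (by linarith)
    _ = (G.degree i * (G.degree i : ℝ)⁻¹ + G.degree i) / N := by
        rw [sum_const, G.card_neighborFinset_eq_degree, nsmul_eq_mul]
        ring
    _ ≤ 1 := by
        rw [div_le_one (by linarith [(G.degree i).cast_nonneg (α := ℝ)])]
        linarith [mul_inv_le_one (a := (G.degree i : ℝ))]

theorem PB_isSymm : Matrix.IsSymm (PB N G) := by
  refine Matrix.IsSymm.ext fun i j => ?_
  by_cases h : G.Adj i j
  · rw [PB_of_adj h, PB_of_adj h.symm, add_comm]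
  · rcases eq_or_ne i j with rfl | hij
    · rfl
    · rw [PB_of_not_adj_of_ne h hij, PB_of_not_adj_of_ne (fun h' => h h'.symm) hij.symm]

theorem PB_mem_rowStochastic : (PB N G : Matrix (Fin N) (Fin N) ℝ) ∈ rowStochastic ℝ (Fin N) := by
  refine mem_rowStochastic_iff_sum.2 ⟨fun i j => ?_, fun i => ?_⟩
  · by_cases h : G.Adj i j
    · rw [PB_of_adj h]
      positivity
    · rcases eq_or_ne i j with rfl | hij
      · rw [PB_self]
        exact sub_nonneg.2 (sum_neighborFinset_PB_le_one i)
      · exact (PB_of_not_adj_of_ne h hij).ge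
  · rw [← sum_add_sum_compl (G.neighborFinset i),
      sum_eq_single_of_mem (s := (G.neighborFinset i)ᶜ) i (by simp) fun k hk hki =>
        PB_of_not_adj_of_ne (by simpa using hk) hki.symm, PB_self]
    ring

theorem div_le_PB_of_adj {i j : Fin N} (h : G.Adj i j) : 2 / (N * (N - 1)) ≤ PB N G i j := by
  have hi : (0 : ℝ) < G.degree i := by exact_mod_cast h.degree_pos_left
  have hj : (0 : ℝ) < G.degree j := by exact_mod_cast h.degree_pos_right
  rw [PB_of_adj h]
  calc 2 / ((N : ℝ) * (N - 1)) = 1 / N * (1 / (N - 1) + 1 / (N - 1)) := by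
        rw [← div_div]; ring
    _ ≤ _ := by
      gcongr <;> linarith [degree_add_one_le (G := G) i, degree_add_one_le (G := G) j]

theorem IsHittingTime.isHittingTimeTo {H : Fin N → Fin N → ℝ} (hH : IsHittingTime N G H)
    (y : Fin N) : IsHittingTimeTo (PB N G) y (H · y) :=
  ⟨hH.1 y, fun x hx => hH.2 x y hx⟩

theorem IsHittingTime.le_add_of_adj {H : Fin N → Fin N → ℝ} (hH : IsHittingTime N G H)
    (y : Fin N) {a b : Fin N} (hab : G.Adj a b) : H b y ≤ H a y + N ^ 2 * (N - 1) / 2 := by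
  have hN : (2 : ℝ) ≤ N := by
    have := a.isLt; have := b.isLt; have := Fin.val_ne_of_ne hab.ne
    exact_mod_cast (by omega : 2 ≤ N)
  have := (hH.isHittingTimeTo y).sub_le_card_div PB_mem_rowStochastic PB_isSymm
    (div_pos two_pos (mul_pos (by linarith) (by linarith))) (div_le_PB_of_adj hab.symm)
  rw [Fintype.card_fin, div_div_eq_mul_div] at this
  linarith

end BiasedWalk

theorem biased_walk_hitting_time_bound_general (N : ℕ) (G : SimpleGraph (Fin N))
    [DecidableRel G.Adj] (hG : G.Connected) (H : Fin N → Fin N → ℝ)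
    (hH : IsHittingTime N G H) :
    ∀ x y : Fin N, H x y < (N : ℝ) ^ 4 / 2 := by
  intro x y
  obtain ⟨p, hp, -⟩ := hG.exists_path_of_dist y x
  have hlen : (p.length : ℝ) ≤ N - 1 := by
    rw [le_sub_iff_add_le]
    exact_mod_cast (by simpa using hp.length_lt : p.length < N)
  have hx := p.le_add_length_mul (f := (H · y)) fun a b => hH.le_add_of_adj y
  have hN : (1 : ℝ) ≤ N := by exact_mod_cast x.pos
  simp only [hH.1, zero_add] at hx
  have hD : (0 : ℝ) ≤ N ^ 2 * (N - 1) / 2 := by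
    have : (0 : ℝ) ≤ N - 1 := by linarith
    positivity
  nlinarith [mul_le_mul_of_nonneg_right hlen hD]

/-- For every connected graph `G` on `N` vertices, the maximum hitting
time of the biased random walk satisfies `H_{P^B}(G) = max_{x,y} H_{P^B}(x,y) < N^4 / 2`. -/
theorem biased_walk_hitting_time_bound (N : ℕ) (hN : 2 ≤ N) (G : SimpleGraph (Fin N))
    [DecidableRel G.Adj] (hG : G.Connected) (H : Fin N → Fin N → ℝ)
    (hH : IsHittingTime N G H) :
    ∀ x y : Fin N, H x y < (N : ℝ) ^ 4 / 2 :=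
  biased_walk_hitting_time_bound_general N G hG H hH
end

section
/- The meeting time of the joint process X is at most twice that of the coupled process X': for all starting vertices x, y, M_X(x,y) ≤ Σ_{i=1}^∞ (1/2)^i · i · M_{X'}(G) = 2·M_{X'}(G), because the two processes are coupled until the walkers meet and each crossing in X' corresponds to an actual meeting in X independently with probability 1/2. -/
open Finset

/-- Total probability that the biased walk at `x` moves (to some neighbor). -/
noncomputable def PBsum (N : ℕ) (G : SimpleGraph (Fin N)) [DecidableRel G.Adj]
    (x : Fin N) : ℝ :=
  ∑ i ∈ G.neighborFinset x, PB N G x i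

/-- `M` is the vector of expected meeting times of the joint process `X` of two opposite
strong opinions at `x` and `y`: if `x ∉ N_y`, exactly one walker moves at a time (each
single move having probability `P^B`), and both stay with probability
`1 - Σ_{i∈N_x}P^B_{xi} - Σ_{j∈N_y}P^B_{yj}`; if `x ∈ N_y`, additionally the walkers
swap positions through the common edge (which counts as meeting) with probability
`P^B_{xy}`, and both stay with probability
`1 - Σ_{i∈N_x}P^B_{xi} - Σ_{j∈N_y}P^B_{yj} + P^B_{xy}`. -/
def IsMeetingTimeX (N : ℕ) (G : SimpleGraph (Fin N)) [DecidableRel G.Adj]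
    (M : Fin N → Fin N → ℝ) : Prop :=
  (∀ x, M x x = 0) ∧
  (∀ x y, x ≠ y → ¬ G.Adj x y →
    M x y = 1 + (∑ i ∈ G.neighborFinset x, PB N G x i * M i y)
      + (∑ j ∈ G.neighborFinset y, PB N G y j * M x j)
      + (1 - PBsum N G x - PBsum N G y) * M x y) ∧
  (∀ x y, G.Adj x y →
    M x y = 1 + (∑ i ∈ (G.neighborFinset x).erase y, PB N G x i * M i y)
      + (∑ j ∈ (G.neighborFinset y).erase x, PB N G y j * M x j)
      + (1 - PBsum N G x - PBsum N G y + PB N G x y) * M x y)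

/-- `M` is the vector of expected meeting times of the coupled process `X'` of two
walkers at `x` and `y`: exactly one walker moves at a time (each single move having
probability `P^B`); if `x ∈ N_y` the walkers meet (at `x` or at `y`) with probability
`2·P^B_{xy}`; both walkers stay with probability
`1 - Σ_{i∈N_x}P^B_{xi} - Σ_{j∈N_y}P^B_{yj}`. -/
def IsMeetingTimeX' (N : ℕ) (G : SimpleGraph (Fin N)) [DecidableRel G.Adj]
    (M : Fin N → Fin N → ℝ) : Prop :=
  (∀ x, M x x = 0) ∧
  (∀ x y, x ≠ y → ¬ G.Adj x y →
    M x y = 1 + (∑ i ∈ G.neighborFinset x, PB N G x i * M i y)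
      + (∑ j ∈ G.neighborFinset y, PB N G y j * M x j)
      + (1 - PBsum N G x - PBsum N G y) * M x y) ∧
  (∀ x y, G.Adj x y →
    M x y = 1 + (∑ i ∈ (G.neighborFinset x).erase y, PB N G x i * M i y)
      + (∑ j ∈ (G.neighborFinset y).erase x, PB N G y j * M x j)
      + (1 - PBsum N G x - PBsum N G y) * M x y)

lemma PB_pos {N : ℕ} (hN : 0 < N) (G : SimpleGraph (Fin N)) [DecidableRel G.Adj]
    {a b : Fin N} (hab : G.Adj a b) : 0 < PB N G a b := by
  rw [PB, if_pos hab]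
  have h1 : (0:ℝ) < (G.degree a : ℝ) := by
    exact_mod_cast (G.degree_pos_iff_exists_adj a).2 ⟨b, hab⟩
  have h2 : (0:ℝ) < (G.degree b : ℝ) := by
    exact_mod_cast (G.degree_pos_iff_exists_adj b).2 ⟨a, hab.symm⟩
  have hNR : (0:ℝ) < (N : ℝ) := by exact_mod_cast hN
  exact mul_pos (div_pos one_pos hNR) (add_pos (div_pos one_pos h1) (div_pos one_pos h2))

lemma PB_symm {N : ℕ} (G : SimpleGraph (Fin N)) [DecidableRel G.Adj]
    {a b : Fin N} (hab : G.Adj a b) : PB N G b a = PB N G a b := by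
  rw [PB, PB, if_pos hab, if_pos hab.symm]; ring

lemma sum_mul_sub {N : ℕ} (s : Finset (Fin N)) (f g h : Fin N → ℝ) :
    ∑ i ∈ s, f i * (g i - h i) = (∑ i ∈ s, f i * g i) - ∑ i ∈ s, f i * h i := by
  rw [← Finset.sum_sub_distrib]
  exact Finset.sum_congr rfl fun i _ => mul_sub _ _ _

/-- The meeting time of the joint process `X` is at most twice that of
the coupled process `X'`: for all starting vertices `x, y`,
`M_X(x,y) ≤ Σ_{i=1}^∞ (1/2)^i · i · M_{X'}(G) = 2·M_{X'}(G)`. -/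
theorem meeting_time_X_le_twice_coupled (N : ℕ) (hN : 2 ≤ N)
    (G : SimpleGraph (Fin N)) [DecidableRel G.Adj] (hG : G.Connected)
    (M : Fin N → Fin N → ℝ) (hM : IsMeetingTimeX N G M)
    (M' : Fin N → Fin N → ℝ) (hM' : IsMeetingTimeX' N G M')
    (MG' : ℝ) (hMG' : IsGreatest {m : ℝ | ∃ x y : Fin N, m = M' x y} MG') :
    (∑' i : ℕ, (1 / 2 : ℝ) ^ i * (i : ℝ)) = 2 ∧
    ∀ x y : Fin N, M x y ≤ (∑' i : ℕ, (1 / 2 : ℝ) ^ i * (i : ℝ)) * MG' := by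
  have ht : (∑' i : ℕ, (1 / 2 : ℝ) ^ i * (i : ℝ)) = 2 := by
    have h := tsum_coe_mul_geometric_of_norm_lt_one (r := (1/2:ℝ)) (by norm_num)
    calc (∑' i : ℕ, (1 / 2 : ℝ) ^ i * (i : ℝ)) = ∑' i : ℕ, (i:ℝ) * (1/2)^i :=
          tsum_congr fun i => mul_comm _ _
      _ = (1/2) / (1 - 1/2)^2 := h
      _ = 2 := by norm_num
  refine ⟨ht, fun x y => ?_⟩
  rw [ht]
  have hN0 : 0 < N := by omega
  obtain ⟨D, hDeq, hDdiag, Dnonadj, Dadj⟩ :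
      ∃ D : Fin N → Fin N → ℝ,
        (∀ a b, M a b = M' a b + D a b) ∧
        (∀ a, D a a = 0) ∧
        (∀ a b, a ≠ b → ¬ G.Adj a b →
          (PBsum N G a + PBsum N G b) * D a b =
            (∑ i ∈ G.neighborFinset a, PB N G a i * D i b)
              + ∑ j ∈ G.neighborFinset b, PB N G b j * D a j) ∧
        (∀ a b, G.Adj a b →
          (PBsum N G a + PBsum N G b) * D a b =
            (∑ i ∈ (G.neighborFinset a).erase b, PB N G a i * D i b)
              + (∑ j ∈ (G.neighborFinset b).erase a, PB N G b j * D a j)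
              + PB N G a b * M a b) := by
    refine ⟨fun a b => M a b - M' a b, fun a b => by ring,
      fun a => by simp [hM.1 a, hM'.1 a], ?_, ?_⟩
    · intro a b hab hnadj
      have e1 := hM.2.1 a b hab hnadj
      have e2 := hM'.2.1 a b hab hnadj
      beta_reduce
      rw [sum_mul_sub, sum_mul_sub]
      linear_combination e1 - e2
    · intro a b hab
      have e1 := hM.2.2 a b hab
      have e2 := hM'.2.2 a b hab
      beta_reduce
      rw [sum_mul_sub, sum_mul_sub]
      linear_combination e1 - e2
  -- maximum of D
  obtain ⟨p0, -, hp0⟩ := Finset.exists_max_image (Finset.univ : Finset (Fin N × Fin N))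
    (fun p => D p.1 p.2) ⟨(x, y), Finset.mem_univ _⟩
  obtain ⟨d, hdmem, hdle⟩ : ∃ d : ℝ, (∃ a b, D a b = d) ∧ ∀ a b, D a b ≤ d :=
    ⟨D p0.1 p0.2, ⟨p0.1, p0.2, rfl⟩, fun a b => hp0 (a, b) (Finset.mem_univ _)⟩
  have hMG0 : 0 ≤ MG' := by
    have : (0:ℝ) ∈ {m : ℝ | ∃ x y : Fin N, m = M' x y} := ⟨x, x, (hM'.1 x).symm⟩
    exact hMG'.2 this
  have hM'le : ∀ a b, M' a b ≤ MG' := fun a b => hMG'.2 ⟨a, b, rfl⟩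
  -- key: d ≤ MG'
  have hdMG : d ≤ MG' := by
    rcases le_or_gt d 0 with hd0 | hd0
    · linarith
    · -- propagate the maximum to an adjacent pair
      have key : ∀ {a b : Fin N} (_ : G.Walk a b), a ≠ b → D a b = d →
          ∃ u v, G.Adj u v ∧ D u v = d := by
        intro a b w
        induction w with
        | nil => intro h _; exact absurd rfl h
        | @cons a c b hac w ih =>
          intro hab hDab
          by_cases hadj : G.Adj a b
          · exact ⟨a, b, hadj, hDab⟩
          · have heq := Dnonadj a b hab hadj
            have hzero : (∑ i ∈ G.neighborFinset a, PB N G a i * (d - D i b))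
                + (∑ j ∈ G.neighborFinset b, PB N G b j * (d - D a j)) = 0 := by
              rw [sum_mul_sub, sum_mul_sub]
              have h1 : ∑ i ∈ G.neighborFinset a, PB N G a i * d = PBsum N G a * d := by
                rw [PBsum, Finset.sum_mul]
              have h2 : ∑ j ∈ G.neighborFinset b, PB N G b j * d = PBsum N G b * d := by
                rw [PBsum, Finset.sum_mul]
              rw [h1, h2]
              linear_combination heq - (PBsum N G a + PBsum N G b) * hDab
            have hterm : ∀ i ∈ G.neighborFinset a, 0 ≤ PB N G a i * (d - D i b) := by
              intro i hi
              have hadj_i : G.Adj a i := by simpa using hi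
              exact mul_nonneg (le_of_lt (PB_pos hN0 G hadj_i)) (by linarith [hdle i b])
            have hterm' : ∀ j ∈ G.neighborFinset b, 0 ≤ PB N G b j * (d - D a j) := by
              intro j hj
              have hadj_j : G.Adj b j := by simpa using hj
              exact mul_nonneg (le_of_lt (PB_pos hN0 G hadj_j)) (by linarith [hdle a j])
            have hs1 : (∑ i ∈ G.neighborFinset a, PB N G a i * (d - D i b)) = 0 := by
              have hn1 : 0 ≤ ∑ i ∈ G.neighborFinset a, PB N G a i * (d - D i b) :=
                Finset.sum_nonneg hterm
              have hn2 : 0 ≤ ∑ j ∈ G.neighborFinset b, PB N G b j * (d - D a j) :=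
                Finset.sum_nonneg hterm'
              linarith
            have hDcb : D c b = d := by
              have hc : c ∈ G.neighborFinset a := by simpa using hac
              have h0 := (Finset.sum_eq_zero_iff_of_nonneg hterm).mp hs1 c hc
              have hp : 0 < PB N G a c := PB_pos hN0 G hac
              rcases mul_eq_zero.mp h0 with h | h
              · exact absurd h (ne_of_gt hp)
              · linarith
            have hcb : c ≠ b := by
              intro h; subst h
              rw [hDdiag c] at hDcb
              linarith
            exact ih hcb hDcb
      obtain ⟨a0, b0, hab0⟩ := hdmem
      have hne : a0 ≠ b0 := by
        intro h; subst h
        rw [hDdiag a0] at hab0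
        linarith
      obtain ⟨u, v, huv, hDuv⟩ := key ((hG.preconnected a0 b0).some) hne hab0
      -- adjacent-pair estimate
      have heq := Dadj u v huv
      have hvmem : v ∈ G.neighborFinset u := by simpa using huv
      have humem : u ∈ G.neighborFinset v := by simpa using huv.symm
      have hb1 : (∑ i ∈ (G.neighborFinset u).erase v, PB N G u i * D i v)
          ≤ (PBsum N G u - PB N G u v) * d := by
        calc (∑ i ∈ (G.neighborFinset u).erase v, PB N G u i * D i v)
            ≤ ∑ i ∈ (G.neighborFinset u).erase v, PB N G u i * d := by
              refine Finset.sum_le_sum fun i hi => ?_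
              have hadj_i : G.Adj u i := by simpa using Finset.mem_of_mem_erase hi
              exact mul_le_mul_of_nonneg_left (hdle i v) (le_of_lt (PB_pos hN0 G hadj_i))
          _ = (∑ i ∈ (G.neighborFinset u).erase v, PB N G u i) * d := by
              rw [Finset.sum_mul]
          _ = (PBsum N G u - PB N G u v) * d := by
              rw [Finset.sum_erase_eq_sub hvmem, PBsum]
      have hb2 : (∑ j ∈ (G.neighborFinset v).erase u, PB N G v j * D u j)
          ≤ (PBsum N G v - PB N G u v) * d := by
        calc (∑ j ∈ (G.neighborFinset v).erase u, PB N G v j * D u j)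
            ≤ ∑ j ∈ (G.neighborFinset v).erase u, PB N G v j * d := by
              refine Finset.sum_le_sum fun j hj => ?_
              have hadj_j : G.Adj v j := by simpa using Finset.mem_of_mem_erase hj
              exact mul_le_mul_of_nonneg_left (hdle u j) (le_of_lt (PB_pos hN0 G hadj_j))
          _ = (∑ j ∈ (G.neighborFinset v).erase u, PB N G v j) * d := by
              rw [Finset.sum_mul]
          _ = (PBsum N G v - PB N G u v) * d := by
              rw [Finset.sum_erase_eq_sub humem, PBsum, PB_symm G huv]
      have hp : 0 < PB N G u v := PB_pos hN0 G huv
      have h2d : 2 * d ≤ M u v := by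
        have hkey : PB N G u v * (2 * d) ≤ PB N G u v * M u v := by
          rw [hDuv] at heq
          nlinarith [heq, hb1, hb2]
        exact le_of_mul_le_mul_left hkey hp
      have hMuv := hDeq u v
      rw [hMuv, hDuv] at h2d
      have := hM'le u v
      linarith
  have hxy := hDeq x y
  have h1 := hM'le x y
  have h2 := hdle x y
  linarith
end
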